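/- arXiv:2411.13412 — 4 statements merged into one kernel-verified Lean document; each statement's English description precedes it below -/
import Mathlib

section
/- Let S and I be DFAs over a finite alphabet A, let C ⊆ A* be a state cover for I (a finite set containing the empty word such that every state of I is reached from its initial state by some word in C), and let W ⊆ A* be a characterization set for S (a finite set containing the empty word such that any two states of S agreeing on all words of W accept the same language). Assume S is minimal (distinct states accept distinct languages). If S and I accept the same words within the set T = C · A^{≤1} · W (concatenation of languages), then S and I are language-equivalent. -/
/-!
Send each state `q` of `I` to the state `g q` of `S` reached by a cover word of `q`. The tests
`C · W` and `C · A · W`, read through the characterization set and the minimality of `S`, show that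
`g` maps the initial state to the initial state, commutes with the transitions and preserves
acceptance. A map with these properties transports languages, so `L(sS) = L(g sI) = L(sI)`.
-/

section

variable {A Q₁ Q₂ : Type} {δS : Q₁ → A → Q₁} {FS : Set Q₁} {δI : Q₂ → A → Q₂} {FI : Set Q₂}

theorem List.foldl_mem_iff_of_hom (g : Q₂ → Q₁) (hstep : ∀ q a, δS (g q) a = g (δI q a))
    (hacc : ∀ q, g q ∈ FS ↔ q ∈ FI) (q : Q₂) (v : List A) :
    List.foldl δS (g q) v ∈ FS ↔ List.foldl δI q v ∈ FI := by
  rw [List.foldl_hom g hstep]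
  exact hacc _

theorem eq_of_agreeOn_of_minimal {W : Set (List A)}
    (hWchar : ∀ p q : Q₁,
      (∀ w ∈ W, (List.foldl δS p w ∈ FS ↔ List.foldl δS q w ∈ FS)) →
      ∀ v : List A, (List.foldl δS p v ∈ FS ↔ List.foldl δS q v ∈ FS))
    (hmin : ∀ p q : Q₁,
      (∀ v : List A, (List.foldl δS p v ∈ FS ↔ List.foldl δS q v ∈ FS)) → p = q)
    {p p' : Q₁} {q : Q₂}
    (hp : ∀ w ∈ W, (List.foldl δS p w ∈ FS ↔ List.foldl δI q w ∈ FI))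
    (hp' : ∀ w ∈ W, (List.foldl δS p' w ∈ FS ↔ List.foldl δI q w ∈ FI)) :
    p = p' :=
  hmin p p' (hWchar p p' fun w hw => (hp w hw).trans (hp' w hw).symm)

end

theorem stmt_0_general {A Q₁ Q₂ : Type}
    (δS : Q₁ → A → Q₁) (sS : Q₁) (FS : Set Q₁)
    (δI : Q₂ → A → Q₂) (sI : Q₂) (FI : Set Q₂)
    (C W : Set (List A))
    (hCε : ([] : List A) ∈ C) (hWε : ([] : List A) ∈ W)
    -- C is a state cover for I
    (hCcover : ∀ q : Q₂, ∃ w ∈ C, List.foldl δI sI w = q)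
    -- W is a characterization set for S
    (hWchar : ∀ p q : Q₁,
      (∀ w ∈ W, (List.foldl δS p w ∈ FS ↔ List.foldl δS q w ∈ FS)) →
      ∀ v : List A, (List.foldl δS p v ∈ FS ↔ List.foldl δS q v ∈ FS))
    -- S is minimal
    (hmin : ∀ p q : Q₁,
      (∀ v : List A, (List.foldl δS p v ∈ FS ↔ List.foldl δS q v ∈ FS)) → p = q)
    -- S and I agree on T = C · A^{≤1} · W
    (hagree : ∀ x ∈ C, ∀ u : List A, u.length ≤ 1 → ∀ w ∈ W,
      (List.foldl δS sS (x ++ u ++ w) ∈ FS ↔ List.foldl δI sI (x ++ u ++ w) ∈ FI)) :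
    ∀ v : List A, (List.foldl δS sS v ∈ FS ↔ List.foldl δI sI v ∈ FI) := by
  choose c hcC hc using hCcover
  let g : Q₂ → Q₁ := fun q => List.foldl δS sS (c q)
  have hagree' : ∀ x ∈ C, ∀ u : List A, u.length ≤ 1 → ∀ w ∈ W,
      (List.foldl δS (List.foldl δS sS (x ++ u)) w ∈ FS ↔
        List.foldl δI (List.foldl δI sI (x ++ u)) w ∈ FI) := by
    simpa only [List.foldl_append] using hagree
  have hcover_agree : ∀ q, ∀ w ∈ W, (List.foldl δS (g q) w ∈ FS ↔ List.foldl δI q w ∈ FI) := by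
    intro q
    simpa only [List.append_nil, hc] using hagree' (c q) (hcC q) [] (by simp)
  have hreach : ∀ x ∈ C, ∀ u : List A, u.length ≤ 1 →
      List.foldl δS sS (x ++ u) = g (List.foldl δI sI (x ++ u)) := fun x hx u hu =>
    eq_of_agreeOn_of_minimal hWchar hmin (hagree' x hx u hu) (hcover_agree _)
  have hinit : g sI = sS := (hreach [] hCε [] (by simp)).symm
  have hstep : ∀ q a, δS (g q) a = g (δI q a) := fun q a => by
    simpa [List.foldl_append, hc] using hreach (c q) (hcC q) [a] (by simp)
  have hacc : ∀ q, g q ∈ FS ↔ q ∈ FI := fun q => hcover_agree q [] hWε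
  intro v
  simpa only [hinit] using List.foldl_mem_iff_of_hom g hstep hacc sI v

/-- Completeness of the test suite `C · A^{≤1} · W` for DFAs
(generalization of Lemma `agreets-equiv-dfa`). -/
theorem stmt_0 {A Q₁ Q₂ : Type} [Fintype A] [Fintype Q₁] [Fintype Q₂]
    (δS : Q₁ → A → Q₁) (sS : Q₁) (FS : Set Q₁)
    (δI : Q₂ → A → Q₂) (sI : Q₂) (FI : Set Q₂)
    (C W : Set (List A)) (hCfin : C.Finite) (hWfin : W.Finite)
    (hCε : ([] : List A) ∈ C) (hWε : ([] : List A) ∈ W)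
    -- C is a state cover for I
    (hCcover : ∀ q : Q₂, ∃ w ∈ C, List.foldl δI sI w = q)
    -- W is a characterization set for S
    (hWchar : ∀ p q : Q₁,
      (∀ w ∈ W, (List.foldl δS p w ∈ FS ↔ List.foldl δS q w ∈ FS)) →
      ∀ v : List A, (List.foldl δS p v ∈ FS ↔ List.foldl δS q v ∈ FS))
    -- S is minimal
    (hmin : ∀ p q : Q₁,
      (∀ v : List A, (List.foldl δS p v ∈ FS ↔ List.foldl δS q v ∈ FS)) → p = q)
    -- S and I agree on T = C · A^{≤1} · W
    (hagree : ∀ x ∈ C, ∀ u : List A, u.length ≤ 1 → ∀ w ∈ W,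
      (List.foldl δS sS (x ++ u ++ w) ∈ FS ↔ List.foldl δI sI (x ++ u ++ w) ∈ FI)) :
    ∀ v : List A, (List.foldl δS sS v ∈ FS ↔ List.foldl δI sI v ∈ FI) :=
  stmt_0_general δS sS FS δI sI FI C W hCε hWε hCcover hWchar hmin hagree
end

section
/- Let S be a minimal DFA with n states, P a state cover for S, W a characterization set for S, and k ∈ ℕ. Then the W-method test suite W_k(P,W) = P · A^{≤k+1} · W is (n+k)-complete for S: for every DFA I with at most n + k states, if S and I accept the same words in W_k(P,W), then S and I are language-equivalent. -/
/-- `(n+k)`-completeness of the W-method test suite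
`W_k(P,W) = P · A^{≤k+1} · W` for a minimal DFA `S` with `n` states. -/
theorem stmt_2 {A Q₁ Q₂ : Type} [Fintype A] [Fintype Q₁] [Fintype Q₂]
    (δS : Q₁ → A → Q₁) (sS : Q₁) (FS : Set Q₁)
    (δI : Q₂ → A → Q₂) (sI : Q₂) (FI : Set Q₂)
    (k : ℕ) (hsize : Fintype.card Q₂ ≤ Fintype.card Q₁ + k)
    (P W : Set (List A)) (hPfin : P.Finite) (hWfin : W.Finite)
    (hPε : ([] : List A) ∈ P) (hWε : ([] : List A) ∈ W)
    -- P is a state cover for S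
    (hPcover : ∀ q : Q₁, ∃ w ∈ P, List.foldl δS sS w = q)
    -- W is a characterization set for S
    (hWchar : ∀ p q : Q₁,
      (∀ w ∈ W, (List.foldl δS p w ∈ FS ↔ List.foldl δS q w ∈ FS)) →
      ∀ v : List A, (List.foldl δS p v ∈ FS ↔ List.foldl δS q v ∈ FS))
    -- S is minimal
    (hmin : ∀ p q : Q₁,
      (∀ v : List A, (List.foldl δS p v ∈ FS ↔ List.foldl δS q v ∈ FS)) → p = q)
    -- S and I agree on W_k(P, W) = P · A^{≤k+1} · W
    (hagree : ∀ x ∈ P, ∀ u : List A, u.length ≤ k + 1 → ∀ w ∈ W,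
      (List.foldl δS sS (x ++ u ++ w) ∈ FS ↔ List.foldl δI sI (x ++ u ++ w) ∈ FI)) :
    ∀ v : List A, (List.foldl δS sS v ∈ FS ↔ List.foldl δI sI v ∈ FI) := by
  classical
  set n := Fintype.card Q₁ with hn
  set sρ : List A → Q₁ := fun v => List.foldl δS sS v with hsρ
  set iρ : List A → Q₂ := fun v => List.foldl δI sI v with hiρ
  set Compat : Q₁ → Q₂ → Prop :=
    fun p q => ∀ w ∈ W, (List.foldl δS p w ∈ FS ↔ List.foldl δI q w ∈ FI) with hCompat
  have huniq : ∀ p q : Q₁, ∀ r : Q₂, Compat p r → Compat q r → p = q := by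
    intro p q r hp hq
    exact hmin p q (hWchar p q (fun w hw => (hp w hw).trans (hq w hw).symm))
  have hgood : ∀ x ∈ P, ∀ u : List A, u.length ≤ k + 1 →
      Compat (sρ (x ++ u)) (iρ (x ++ u)) := by
    intro x hx u hu w hw
    have := hagree x hx u hu w hw
    simpa [hsρ, hiρ, List.foldl_append] using this
  set T : ℕ → Finset Q₂ := fun i =>
    Finset.univ.filter (fun q => ∃ x ∈ P, ∃ u : List A, u.length ≤ i ∧ iρ (x ++ u) = q)
    with hT
  have hmemT : ∀ i q, q ∈ T i ↔
      ∃ x ∈ P, ∃ u : List A, u.length ≤ i ∧ iρ (x ++ u) = q := by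
    intro i q; simp [hT]
  have hmono : ∀ i, T i ⊆ T (i+1) := by
    intro i q hq
    rw [hmemT] at hq ⊢
    obtain ⟨x, hx, u, hu, h⟩ := hq
    exact ⟨x, hx, u, hu.trans (Nat.le_succ i), h⟩
  choose xf hxfP hxfρ using hPcover
  have hcard0 : n ≤ (T 0).card := by
    have := Finset.card_le_card_of_injOn (f := fun q : Q₁ => iρ (xf q))
      (s := (Finset.univ : Finset Q₁)) (t := T 0)
      (by
        intro q _
        rw [Finset.mem_coe, hmemT]
        exact ⟨xf q, hxfP q, [], by simp, by simp⟩)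
      (by
        intro p _ q _ hpq
        simp only at hpq
        have hp : Compat (sρ (xf p)) (iρ (xf p)) := by
          simpa using hgood (xf p) (hxfP p) [] (by simp)
        have hq : Compat (sρ (xf q)) (iρ (xf q)) := by
          simpa using hgood (xf q) (hxfP q) [] (by simp)
        have := huniq (sρ (xf p)) (sρ (xf q)) (iρ (xf p)) hp (hpq ▸ hq)
        have hp' : sρ (xf p) = p := hxfρ p
        have hq' : sρ (xf q) = q := hxfρ q
        rw [hp', hq'] at this
        exact this)
    simpa [hn] using this
  have hstab : ∃ i ≤ k, T i = T (i+1) := by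
    by_contra h
    push_neg at h
    have hgrow : ∀ i, i ≤ k + 1 → n + i ≤ (T i).card := by
      intro i
      induction i with
      | zero => intro _; simpa using hcard0
      | succ j ih =>
        intro hj
        have hjk : j ≤ k := Nat.lt_succ_iff.mp hj
        have hlt : (T j).card < (T (j+1)).card :=
          Finset.card_lt_card (Finset.ssubset_iff_subset_ne.mpr ⟨hmono j, h j hjk⟩)
        have := ih (hjk.trans (Nat.le_succ k))
        omega
    have h1 := hgrow (k+1) le_rfl
    have h2 : (T (k+1)).card ≤ Fintype.card Q₂ := Finset.card_le_univ _
    have h3 : Fintype.card Q₂ ≤ n + k := by rw [hn]; exact hsize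
    omega
  obtain ⟨i, hik, hTeq⟩ := hstab
  -- every reachable state of I is in T i
  have hreach : ∀ v : List A, iρ v ∈ T i := by
    intro v
    induction v using List.reverseRecOn with
    | nil =>
      rw [hmemT]
      exact ⟨[], hPε, [], by simp, by simp⟩
    | append_singleton v a ih =>
      rw [hmemT] at ih
      obtain ⟨x, hx, u, hu, h⟩ := ih
      rw [hTeq, hmemT]
      refine ⟨x, hx, u ++ [a], by simp; omega, ?_⟩
      have : iρ (x ++ (u ++ [a])) = δI (iρ (x ++ u)) a := by
        simp [hiρ, List.foldl_append]
      rw [this, h]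
      simp [hiρ, List.foldl_append]
  have hmain : ∀ v : List A, Compat (sρ v) (iρ v) := by
    intro v
    induction v using List.reverseRecOn with
    | nil => simpa using hgood [] hPε [] (by simp)
    | append_singleton v a ih =>
      obtain ⟨x, hx, u, hu, heq⟩ := (hmemT i (iρ v)).1 (hreach v)
      have h1 : Compat (sρ (x ++ u)) (iρ v) :=
        heq ▸ hgood x hx u (by omega)
      have h2 : sρ (x ++ u) = sρ v := huniq _ _ _ h1 ih
      have h3 := hgood x hx (u ++ [a]) (by simp; omega)
      have e1 : sρ (x ++ (u ++ [a])) = sρ (v ++ [a]) := by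
        have : sρ (x ++ (u ++ [a])) = δS (sρ (x ++ u)) a := by
          simp [hsρ, List.foldl_append]
        rw [this, h2]
        simp [hsρ, List.foldl_append]
      have e2 : iρ (x ++ (u ++ [a])) = iρ (v ++ [a]) := by
        have : iρ (x ++ (u ++ [a])) = δI (iρ (x ++ u)) a := by
          simp [hiρ, List.foldl_append]
        rw [this, heq]
        simp [hiρ, List.foldl_append]
      rw [← List.append_assoc] at h3 e1 e2
      rw [← e1, ← e2]
      exact h3
  intro v
  have := hmain v [] hWε
  simpa using this
end

section
/- Let S and I be deterministic Moore automata over alphabet A with outputs in a set O (transition functions δ_S, δ_I, output functions f_S, f_I, initial states s₀, i₀). Suppose S is minimal (the map sending a state to its output language is injective), (c : C → A*, δ_C) is a weak state cover for I, and W ⊆ A* is a characterization set for S containing ε. If for every x ∈ C, u ∈ A^{≤1}, w ∈ W the outputs agree, i.e. f_S(δ_S*(s₀, c(x)·u·w)) = f_I(δ_I*(i₀, c(x)·u·w)), then S and I are equivalent: f_S(δ_S*(s₀, v)) = f_I(δ_I*(i₀, v)) for all v ∈ A*. -/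
/-!
Fix `x₀ ∈ C` with `c x₀ = ε` and read a word `v` in the cover automaton, reaching `x = δC*(x₀, v)`.
By the weak-cover property `c x` leads `I` to the same state as `v`. It also leads `S` to a state
with the same output language as `v`: inductively, `c x · a` and `c (δC x a)` lead `I` to the same
state, so the tests `c x · a · W` and `c (δC x a) · W` show that the two `S`-states agree on `W`,
hence everywhere. The single test `c x` then gives `f_S(v) = f_S(c x) = f_I(c x) = f_I(v)`.
-/

section Moore

variable {A O Q : Type*}

def outputLanguage (δ : Q → A → Q) (f : Q → O) (q : Q) : List A → O :=
  fun w => f (List.foldl δ q w)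

def IsCharacterizationSet (δ : Q → A → Q) (f : Q → O) (W : Set (List A)) : Prop :=
  ∀ p q : Q, Set.EqOn (outputLanguage δ f p) (outputLanguage δ f q) W →
    outputLanguage δ f p = outputLanguage δ f q

theorem outputLanguage_foldl (δ : Q → A → Q) (f : Q → O) (q : Q) (u w : List A) :
    outputLanguage δ f (List.foldl δ q u) w = outputLanguage δ f q (u ++ w) := by
  simp only [outputLanguage, List.foldl_append]

theorem outputLanguage_foldl_congr {δ : Q → A → Q} {f : Q → O} {p q : Q}
    (h : outputLanguage δ f p = outputLanguage δ f q) (u : List A) :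
    outputLanguage δ f (List.foldl δ p u) = outputLanguage δ f (List.foldl δ q u) := by
  funext w
  rw [outputLanguage_foldl, outputLanguage_foldl, h]

end Moore

section WeakStateCover

variable {A O QS QI C : Type*}
  {δS : QS → A → QS} {fS : QS → O} {s₀ : QS}
  {δI : QI → A → QI} {fI : QI → O} {i₀ : QI}
  {c : C → List A} {δC : C → A → C}

theorem foldl_cover_foldl {x₀ : C} (hx₀ : c x₀ = [])
    (hwsc : ∀ x a, List.foldl δI i₀ (c (δC x a)) = List.foldl δI i₀ (c x ++ [a]))
    (v : List A) :
    List.foldl δI i₀ (c (List.foldl δC x₀ v)) = List.foldl δI i₀ v := by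
  induction v using List.reverseRecOn with
  | nil => simp [hx₀]
  | append_singleton v a ih =>
    simp only [List.foldl_append, List.foldl_cons, List.foldl_nil, hwsc, ih]

theorem outputLanguage_cover_step {W : Set (List A)}
    (hW : IsCharacterizationSet δS fS W)
    (hwsc : ∀ x a, List.foldl δI i₀ (c (δC x a)) = List.foldl δI i₀ (c x ++ [a]))
    (hagree : ∀ (x : C) (u : List A), u.length ≤ 1 → ∀ w ∈ W,
      fS (List.foldl δS s₀ (c x ++ u ++ w)) = fI (List.foldl δI i₀ (c x ++ u ++ w)))
    (x : C) (a : A) :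
    outputLanguage δS fS (List.foldl δS s₀ (c (δC x a))) =
      outputLanguage δS fS (List.foldl δS s₀ (c x ++ [a])) := by
  refine hW _ _ fun w hw => ?_
  have hcover := hagree (δC x a) [] (by simp) w hw
  have hstep := hagree x [a] (by simp) w hw
  rw [List.append_nil] at hcover
  rw [outputLanguage_foldl, outputLanguage_foldl]
  unfold outputLanguage
  rw [hcover, hstep, List.foldl_append, hwsc, ← List.foldl_append]

theorem outputLanguage_cover_foldl {W : Set (List A)} {x₀ : C} (hx₀ : c x₀ = [])
    (hW : IsCharacterizationSet δS fS W)
    (hwsc : ∀ x a, List.foldl δI i₀ (c (δC x a)) = List.foldl δI i₀ (c x ++ [a]))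
    (hagree : ∀ (x : C) (u : List A), u.length ≤ 1 → ∀ w ∈ W,
      fS (List.foldl δS s₀ (c x ++ u ++ w)) = fI (List.foldl δI i₀ (c x ++ u ++ w)))
    (v : List A) :
    outputLanguage δS fS (List.foldl δS s₀ (c (List.foldl δC x₀ v))) =
      outputLanguage δS fS (List.foldl δS s₀ v) := by
  induction v using List.reverseRecOn with
  | nil => simp [hx₀]
  | append_singleton v a ih =>
    have hread : List.foldl δC x₀ (v ++ [a]) = δC (List.foldl δC x₀ v) a := by simp
    rw [hread, outputLanguage_cover_step hW hwsc hagree, List.foldl_append, List.foldl_append]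
    exact outputLanguage_foldl_congr ih [a]

end WeakStateCover

theorem stmt_5_general {A O QS QI C : Type}
    (δS : QS → A → QS) (fS : QS → O) (s₀ : QS)
    (δI : QI → A → QI) (fI : QI → O) (i₀ : QI)
    (c : C → List A) (δC : C → A → C)
    -- (c, δC) is a weak state cover for I
    (hcε : ∃ x : C, c x = [])
    (hwsc : ∀ (x : C) (a : A),
      List.foldl δI i₀ (c (δC x a)) = List.foldl δI i₀ (c x ++ [a]))
    -- W is a characterization set for S, containing ε
    (W : Set (List A)) (hWε : ([] : List A) ∈ W)
    (hW : ∀ p q : QS,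
      (∀ w ∈ W, fS (List.foldl δS p w) = fS (List.foldl δS q w)) →
      ∀ v : List A, fS (List.foldl δS p v) = fS (List.foldl δS q v))
    -- agreement on the test suite
    (hagree : ∀ (x : C) (u : List A), u.length ≤ 1 → ∀ w ∈ W,
      fS (List.foldl δS s₀ (c x ++ u ++ w)) =
        fI (List.foldl δI i₀ (c x ++ u ++ w))) :
    ∀ v : List A,
      fS (List.foldl δS s₀ v) = fI (List.foldl δI i₀ v) := by
  intro v
  obtain ⟨x₀, hx₀⟩ := hcε
  have hWchar : IsCharacterizationSet δS fS W := fun p q h => funext (hW p q h)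
  set x := List.foldl δC x₀ v
  have hS := congrFun (outputLanguage_cover_foldl hx₀ hWchar hwsc hagree v) []
  have hI := foldl_cover_foldl hx₀ hwsc v
  have htest := hagree x [] (by simp) [] hWε
  simp only [outputLanguage, List.foldl_nil, List.append_nil] at hS htest
  rw [← hS, htest, hI]

/-- Main theorem instantiated to Moore machines: agreement on the
test suite `c · A^{≤1} · W` built from a weak state cover `(c, δC)` of the
implementation and a characterization set `W` of the minimal specification
implies equivalence. -/
theorem stmt_5 {A O QS QI C : Type}
    (δS : QS → A → QS) (fS : QS → O) (s₀ : QS)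
    (δI : QI → A → QI) (fI : QI → O) (i₀ : QI)
    (c : C → List A) (δC : C → A → C)
    -- S is minimal: the state-to-output-language map is injective
    (hmin : Function.Injective
      (fun q : QS => fun w : List A => fS (List.foldl δS q w)))
    -- (c, δC) is a weak state cover for I
    (hcε : ∃ x : C, c x = [])
    (hwsc : ∀ (x : C) (a : A),
      List.foldl δI i₀ (c (δC x a)) = List.foldl δI i₀ (c x ++ [a]))
    -- W is a characterization set for S, containing ε
    (W : Set (List A)) (hWε : ([] : List A) ∈ W)
    (hW : ∀ p q : QS,
      (∀ w ∈ W, fS (List.foldl δS p w) = fS (List.foldl δS q w)) →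
      ∀ v : List A, fS (List.foldl δS p v) = fS (List.foldl δS q v))
    -- agreement on the test suite
    (hagree : ∀ (x : C) (u : List A), u.length ≤ 1 → ∀ w ∈ W,
      fS (List.foldl δS s₀ (c x ++ u ++ w)) =
        fI (List.foldl δI i₀ (c x ++ u ++ w))) :
    ∀ v : List A,
      fS (List.foldl δS s₀ v) = fI (List.foldl δI i₀ v) :=
  stmt_5_general δS fS s₀ δI fI i₀ c δC hcε hwsc W hWε hW hagree
end

section
/- Let S and I be weighted automata over a field K and finite alphabet A, with recognized languages L_S, L_I : A* → K. Suppose S is minimal (for every state-weight vector s, L_S,s = 0 implies s = 0, where L_{S,s}(w) = f_Sᵀ M_w^S s), W ⊆ A* is a characterization set for S containing ε, C ⊆ A* contains ε and {M^I_x s₀^I | x ∈ C} spans the state space of I. If L_S(x·u·w) = L_I(x·u·w) for all x ∈ C, u ∈ A^{≤1}, w ∈ W, then L_S = L_I. -/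
open Matrix

/-- The matrix of a word: `M_ε = 1`, `M_{wa} = M_a * M_w`. -/
def stmt17.Mword {K Q A : Type} [Semiring K] [Fintype Q] [DecidableEq Q]
    (M : A → Matrix Q Q K) (w : List A) : Matrix Q Q K :=
  w.foldl (fun acc a => M a * acc) 1

/-!
Call a specification state `s` and an implementation state `t` related when their languages
agree on `W`. Related pairs form a subspace, and every pair `(M^S_x s₀, M^I_x s₀)` with `x ∈ C`
even agrees on `A^{≤1} W`; since these `t`-components span, every implementation state `t` has
a partner `s'` agreeing with it on `A^{≤1} W`. If `(s, t)` is related, then `s` and `s'` agree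
on `W`, hence everywhere because `W` is a characterization set, so `(M_a s, M_a t)` is again
related through `s'`. The relation is thus a bisimulation, it contains `(s₀, s₀)` because
`ε ∈ C`, and it forces equal outputs because `ε ∈ W`.
-/

namespace stmt17

section Semiring

variable {K Q Q' A : Type} [Semiring K] [Fintype Q] [DecidableEq Q] [Fintype Q'] [DecidableEq Q']
  (M : A → Matrix Q Q K) (M' : A → Matrix Q' Q' K)

theorem foldl_mul_eq_Mword_mul (w : List A) (N : Matrix Q Q K) :
    w.foldl (fun acc a => M a * acc) N = Mword M w * N := by
  induction w generalizing N with
  | nil => simp [Mword]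
  | cons a w ih =>
    change w.foldl _ (M a * N) = w.foldl _ (M a * 1) * N
    rw [ih, ih, Matrix.mul_one, Matrix.mul_assoc]

@[simp]
theorem Mword_nil : Mword M ([] : List A) = 1 := rfl

theorem Mword_append (x y : List A) : Mword M (x ++ y) = Mword M y * Mword M x := by
  rw [Mword, List.foldl_append, foldl_mul_eq_Mword_mul]
  rfl

theorem Mword_cons (a : A) (w : List A) : Mword M (a :: w) = Mword M w * M a := by
  change w.foldl _ (M a * 1) = _
  rw [foldl_mul_eq_Mword_mul, Matrix.mul_one]

/-- The language `L_s(w) = fᵀ M_w s` of the automaton `(M, f)` started in the state vector `s`. -/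
def lang (f s : Q → K) (w : List A) : K :=
  f ⬝ᵥ (Mword M w).mulVec s

variable {M}

@[simp]
theorem lang_nil (f s : Q → K) : lang M f s [] = f ⬝ᵥ s := by
  rw [lang, Mword_nil, one_mulVec]

theorem lang_append (f s : Q → K) (x w : List A) :
    lang M f s (x ++ w) = lang M f (Mword M x *ᵥ s) w := by
  simp only [lang, Mword_append, mulVec_mulVec]

theorem lang_cons (f s : Q → K) (a : A) (w : List A) :
    lang M f s (a :: w) = lang M f (M a *ᵥ s) w := by
  simp only [lang, Mword_cons, mulVec_mulVec]

theorem lang_eq_of_bisimulation {f : Q → K} {f' : Q' → K} (R : (Q → K) → (Q' → K) → Prop)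
    (hout : ∀ s t, R s t → f ⬝ᵥ s = f' ⬝ᵥ t)
    (hstep : ∀ s t, R s t → ∀ a, R (M a *ᵥ s) (M' a *ᵥ t)) {s : Q → K} {t : Q' → K}
    (hst : R s t) : lang M f s = lang M' f' t := by
  funext w
  induction w generalizing s t with
  | nil => rw [lang_nil, lang_nil]; exact hout s t hst
  | cons a w ih => rw [lang_cons, lang_cons]; exact ih (hstep s t hst a)

end Semiring

section CommRing

variable {K Q Q' A : Type} [CommRing K] [Fintype Q] [DecidableEq Q] [Fintype Q'] [DecidableEq Q']
  {M : A → Matrix Q Q K} {f : Q → K}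

theorem lang_add (s s' : Q → K) (w : List A) :
    lang M f (s + s') w = lang M f s w + lang M f s' w := by
  simp only [lang, mulVec_add, dotProduct_add]

theorem lang_smul (c : K) (s : Q → K) (w : List A) :
    lang M f (c • s) w = c * lang M f s w := by
  simp only [lang, mulVec_smul, dotProduct_smul, smul_eq_mul]

theorem lang_sub (s s' : Q → K) (w : List A) :
    lang M f (s - s') w = lang M f s w - lang M f s' w := by
  simp only [lang, mulVec_sub, dotProduct_sub]

def IsCharacterizationSet (M : A → Matrix Q Q K) (f : Q → K) (W : Set (List A)) : Prop :=
  ∀ s : Q → K, (∀ w ∈ W, lang M f s w = 0) → ∀ w, lang M f s w = 0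

theorem IsCharacterizationSet.lang_eq_of_eqOn {W : Set (List A)}
    (hW : IsCharacterizationSet M f W) {s s' : Q → K}
    (h : ∀ w ∈ W, lang M f s w = lang M f s' w) : lang M f s = lang M f s' := by
  funext w
  rw [← sub_eq_zero, ← lang_sub]
  exact hW _ (fun w hw => by rw [lang_sub, h w hw, sub_self]) w

variable (M f) (M' : A → Matrix Q' Q' K) (f' : Q' → K)

def agreeOn (T : Set (List A)) : Submodule K ((Q → K) × (Q' → K)) where
  carrier := {p | ∀ w ∈ T, lang M f p.1 w = lang M' f' p.2 w}
  zero_mem' w _ := by simp [lang]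
  add_mem' hp hq w hw := by
    simp only [Prod.fst_add, Prod.snd_add, lang_add, hp w hw, hq w hw]
  smul_mem' c p hp w hw := by
    simp only [Prod.smul_fst, Prod.smul_snd, lang_smul, hp w hw]

variable {M f M' f'}

theorem agreeOn_anti {T T' : Set (List A)} (h : T ⊆ T') :
    agreeOn M f M' f' T' ≤ agreeOn M f M' f' T :=
  fun _ hp w hw => hp w (h hw)

theorem exists_mem_agreeOn_of_span_eq_top {T X : Set (List A)} {s₀ : Q → K} {t₀ : Q' → K}
    (hX : Submodule.span K ((fun x => Mword M' x *ᵥ t₀) '' X) = ⊤)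
    (h : ∀ x ∈ X, (Mword M x *ᵥ s₀, Mword M' x *ᵥ t₀) ∈ agreeOn M f M' f' T) (t : Q' → K) :
    ∃ s, (s, t) ∈ agreeOn M f M' f' T := by
  have hspan : Submodule.span K ((fun x => Mword M' x *ᵥ t₀) '' X) ≤
      (agreeOn M f M' f' T).map (LinearMap.snd K _ _) :=
    Submodule.span_le.2 (by rintro _ ⟨x, hx, rfl⟩; exact ⟨_, h x hx, rfl⟩)
  rw [hX] at hspan
  obtain ⟨⟨s, _⟩, hp, rfl⟩ := hspan Submodule.mem_top
  exact ⟨s, hp⟩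

/-- The words of `A^{≤1} · W`. -/
def prependAtMostOne (W : Set (List A)) : Set (List A) :=
  Set.image2 (· ++ ·) {u | u.length ≤ 1} W

theorem subset_prependAtMostOne (W : Set (List A)) : W ⊆ prependAtMostOne W :=
  fun w hw => ⟨[], by simp, w, hw, rfl⟩

theorem cons_mem_prependAtMostOne {W : Set (List A)} (a : A) {w : List A} (hw : w ∈ W) :
    a :: w ∈ prependAtMostOne W :=
  ⟨[a], by simp, w, hw, rfl⟩

theorem mulVec_mem_agreeOn {W : Set (List A)} (hW : IsCharacterizationSet M f W)
    {s s' : Q → K} {t : Q' → K} (hs : (s, t) ∈ agreeOn M f M' f' W)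
    (hs' : (s', t) ∈ agreeOn M f M' f' (prependAtMostOne W)) (a : A) :
    (M a *ᵥ s, M' a *ᵥ t) ∈ agreeOn M f M' f' W := by
  have hs'W : (s', t) ∈ agreeOn M f M' f' W :=
    agreeOn_anti (subset_prependAtMostOne W) hs'
  have hss' : lang M f s = lang M f s' :=
    hW.lang_eq_of_eqOn fun w hw => (hs w hw).trans (hs'W w hw).symm
  intro w hw
  calc lang M f (M a *ᵥ s) w = lang M f s' (a :: w) := by rw [← lang_cons, hss']
    _ = lang M' f' t (a :: w) := hs' _ (cons_mem_prependAtMostOne a hw)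
    _ = lang M' f' (M' a *ᵥ t) w := lang_cons _ _ _ _

end CommRing

end stmt17

open stmt17

theorem stmt_17_general {K A QS QI : Type} [Field K]
    [Fintype QS] [DecidableEq QS] [Fintype QI] [DecidableEq QI]
    (MS : A → Matrix QS QS K) (s₀S : QS → K) (fS : QS → K)
    (MI : A → Matrix QI QI K) (s₀I : QI → K) (fI : QI → K)
    -- W is a characterization set for S containing ε
    (W : Set (List A)) (hWε : ([] : List A) ∈ W)
    (hW : ∀ s : QS → K,
      (∀ w ∈ W, fS ⬝ᵥ (stmt17.Mword MS w).mulVec s = 0) →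
      ∀ w : List A, fS ⬝ᵥ (stmt17.Mword MS w).mulVec s = 0)
    -- C contains ε and the vectors reached via C span the state space of I
    (C : Set (List A)) (hCε : ([] : List A) ∈ C)
    (hC : Submodule.span K
      ((fun x : List A => (stmt17.Mword MI x).mulVec s₀I) '' C) = ⊤)
    -- agreement on C · A^{≤1} · W
    (hagree : ∀ x ∈ C, ∀ u : List A, u.length ≤ 1 → ∀ w ∈ W,
      fS ⬝ᵥ (stmt17.Mword MS (x ++ u ++ w)).mulVec s₀S =
        fI ⬝ᵥ (stmt17.Mword MI (x ++ u ++ w)).mulVec s₀I) :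
    ∀ v : List A,
      fS ⬝ᵥ (stmt17.Mword MS v).mulVec s₀S =
        fI ⬝ᵥ (stmt17.Mword MI v).mulVec s₀I := by
  have hreached : ∀ x ∈ C, (Mword MS x *ᵥ s₀S, Mword MI x *ᵥ s₀I) ∈
      agreeOn MS fS MI fI (prependAtMostOne W) := by
    rintro x hx _ ⟨u, hu, w, hw, rfl⟩
    have h : lang MS fS s₀S (x ++ u ++ w) = lang MI fI s₀I (x ++ u ++ w) :=
      hagree x hx u hu w hw
    simpa only [List.append_assoc, lang_append] using h
  have hstart : (s₀S, s₀I) ∈ agreeOn MS fS MI fI W := fun w hw => by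
    simpa [lang] using hagree [] hCε [] (by simp) w hw
  have hlang := lang_eq_of_bisimulation MI (fun s t => (s, t) ∈ agreeOn MS fS MI fI W)
    (fun s t hst => by simpa using hst [] hWε)
    (fun s t hst a =>
      have ⟨_, hs'⟩ := exists_mem_agreeOn_of_span_eq_top hC hreached t
      mulVec_mem_agreeOn hW hst hs' a)
    hstart
  exact fun v => congrFun hlang v

/-- Completeness of the test suite `C · A^{≤1} · W` for weighted
automata: if the minimal specification `S` and the implementation `I` agree on
it, where `W` is a characterization set for `S` and the vectors reached via `C`
span the state space of `I`, then `L_S = L_I`. -/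
theorem stmt_17 {K A QS QI : Type} [Field K] [Fintype A]
    [Fintype QS] [DecidableEq QS] [Fintype QI] [DecidableEq QI]
    (MS : A → Matrix QS QS K) (s₀S : QS → K) (fS : QS → K)
    (MI : A → Matrix QI QI K) (s₀I : QI → K) (fI : QI → K)
    -- S is minimal
    (hmin : ∀ s : QS → K,
      (∀ w : List A, fS ⬝ᵥ (stmt17.Mword MS w).mulVec s = 0) → s = 0)
    -- W is a characterization set for S containing ε
    (W : Set (List A)) (hWε : ([] : List A) ∈ W)
    (hW : ∀ s : QS → K,
      (∀ w ∈ W, fS ⬝ᵥ (stmt17.Mword MS w).mulVec s = 0) →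
      ∀ w : List A, fS ⬝ᵥ (stmt17.Mword MS w).mulVec s = 0)
    -- C contains ε and the vectors reached via C span the state space of I
    (C : Set (List A)) (hCε : ([] : List A) ∈ C)
    (hC : Submodule.span K
      ((fun x : List A => (stmt17.Mword MI x).mulVec s₀I) '' C) = ⊤)
    -- agreement on C · A^{≤1} · W
    (hagree : ∀ x ∈ C, ∀ u : List A, u.length ≤ 1 → ∀ w ∈ W,
      fS ⬝ᵥ (stmt17.Mword MS (x ++ u ++ w)).mulVec s₀S =
        fI ⬝ᵥ (stmt17.Mword MI (x ++ u ++ w)).mulVec s₀I) :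
    ∀ v : List A,
      fS ⬝ᵥ (stmt17.Mword MS v).mulVec s₀S =
        fI ⬝ᵥ (stmt17.Mword MI v).mulVec s₀I :=
  stmt_17_general MS s₀S fS MI s₀I fI W hWε hW C hCε hC hagree
end
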